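/- For every λ ∈ ℂ the polynomial F_λ ∈ ℂ[x0,x1,x2] is invariant under the three substitutions induced by the matrices σ, τ, ι: F_λ(x1,x2,x0) = F_λ(x0,x1,x2), F_λ(x0, ρx1, ρ²x2) = F_λ(x0,x1,x2), and F_λ(x0,x2,x1) = F_λ(x0,x1,x2). Consequently the zero set of F_λ in P²(ℂ) is invariant under the subgroup of GL₃(ℂ) generated by σ, τ, ι. -/
import Mathlib


open Matrix Complex
open scoped LinearAlgebra.Projectivization

noncomputable section

/-- `ρ = exp(2πi/3)`, a primitive cube root of unity. -/
def ρ : ℂ := Complex.exp (2 * Real.pi * Complex.I / 3)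

lemma ρ_ne_zero : ρ ≠ 0 := Complex.exp_ne_zero _

/-- The polynomial `G_λ` as a function of `(y0, y1, y2)`. -/
def Gpoly (lam : ℂ) (y : Fin 3 → ℂ) : ℂ :=
  ((y 0) ^ 6 + (y 1) ^ 6 + (y 2) ^ 6)
    + 2 * (2 * lam ^ 3 - 1) * ((y 0) ^ 3 * (y 1) ^ 3 + (y 0) ^ 3 * (y 2) ^ 3
        + (y 1) ^ 3 * (y 2) ^ 3)
    - 6 * lam ^ 2 * (y 0) * (y 1) * (y 2) * ((y 0) ^ 3 + (y 1) ^ 3 + (y 2) ^ 3)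
    - 3 * lam * (lam ^ 3 - 4) * (y 0) ^ 2 * (y 1) ^ 2 * (y 2) ^ 2

/-- The substitution `y = y(x)`. -/
def subst (lam : ℂ) (x : Fin 3 → ℂ) : Fin 3 → ℂ :=
  ![3 * (x 0) ^ 2 - 3 * lam * (x 1) * (x 2),
    3 * (x 1) ^ 2 - 3 * lam * (x 0) * (x 2),
    3 * (x 2) ^ 2 - 3 * lam * (x 0) * (x 1)]

/-- The (evaluation of the) homogeneous polynomial `F_λ` of degree 12 in `(x0, x1, x2)`. -/
def Fpoly (lam : ℂ) (x : Fin 3 → ℂ) : ℂ := Gpoly lam (subst lam x)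

/-- The matrix `σ`. -/
def σmat : Matrix (Fin 3) (Fin 3) ℂ := !![0, 1, 0; 0, 0, 1; 1, 0, 0]

/-- The matrix `τ`. -/
def τmat : Matrix (Fin 3) (Fin 3) ℂ := !![1, 0, 0; 0, ρ, 0; 0, 0, ρ ^ 2]

/-- The matrix `ι`. -/
def ιmat : Matrix (Fin 3) (Fin 3) ℂ := !![1, 0, 0; 0, 0, 1; 0, 1, 0]

lemma σmat_det : σmat.det ≠ 0 := by
  simp [σmat, Matrix.det_fin_three]

lemma τmat_det : τmat.det ≠ 0 := by
  simpa [τmat, Matrix.det_fin_three, pow_succ] using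
    mul_ne_zero ρ_ne_zero (mul_ne_zero ρ_ne_zero ρ_ne_zero)

lemma ιmat_det : ιmat.det ≠ 0 := by
  simp [ιmat, Matrix.det_fin_three]

/-- `σ` as element of `GL₃(ℂ)`. -/
def σgl : GL (Fin 3) ℂ := Matrix.GeneralLinearGroup.mkOfDetNeZero σmat σmat_det

/-- `τ` as element of `GL₃(ℂ)`. -/
def τgl : GL (Fin 3) ℂ := Matrix.GeneralLinearGroup.mkOfDetNeZero τmat τmat_det

/-- `ι` as element of `GL₃(ℂ)`. -/
def ιgl : GL (Fin 3) ℂ := Matrix.GeneralLinearGroup.mkOfDetNeZero ιmat ιmat_det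

/-- The subgroup `G` of `GL₃(ℂ)` generated by `σ, τ, ι`. -/
def Hgrp : Subgroup (GL (Fin 3) ℂ) := Subgroup.closure {σgl, τgl, ιgl}

lemma mulVec_injective (M : GL (Fin 3) ℂ) :
    Function.Injective (M : Matrix (Fin 3) (Fin 3) ℂ).mulVecLin := by
  intro v w h
  have h' : (M : Matrix (Fin 3) (Fin 3) ℂ) *ᵥ v = (M : Matrix (Fin 3) (Fin 3) ℂ) *ᵥ w := h
  have h2 : ((M⁻¹ * M : GL (Fin 3) ℂ) : Matrix (Fin 3) (Fin 3) ℂ) *ᵥ v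
      = ((M⁻¹ * M : GL (Fin 3) ℂ) : Matrix (Fin 3) (Fin 3) ℂ) *ᵥ w := by
    simp only [Units.val_mul, ← Matrix.mulVec_mulVec]
    exact congrArg _ h'
  simpa using h2

/-- The action of `GL₃(ℂ)` on `ℙ²(ℂ)` given by `(M, [v]) ↦ [Mv]`. -/
def act (M : GL (Fin 3) ℂ) (p : ℙ ℂ (Fin 3 → ℂ)) : ℙ ℂ (Fin 3 → ℂ) :=
  Projectivization.map (M : Matrix (Fin 3) (Fin 3) ℂ).mulVecLin (mulVec_injective M) p

/-- The orbit of a point of `ℙ²(ℂ)` under the subgroup `G` generated by `σ, τ, ι`. -/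
def Horbit (p : ℙ ℂ (Fin 3 → ℂ)) : Set (ℙ ℂ (Fin 3 → ℂ)) :=
  {q | ∃ M ∈ Hgrp, act M p = q}

lemma vec_ne_zero {v : Fin 3 → ℂ} (i : Fin 3) (h : v i ≠ 0) : v ≠ 0 :=
  fun hv => h (by simp [hv])

/-- The point of `ℙ²(ℂ)` with homogeneous coordinates `(a : b : c)`, where the `i`-th
coordinate is nonzero. -/
def pt (a b c : ℂ) (i : Fin 3) (h : ![a, b, c] i ≠ 0) : ℙ ℂ (Fin 3 → ℂ) :=
  Projectivization.mk ℂ ![a, b, c] (vec_ne_zero i h)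

/-- The line `l_{1i} : x1 = ρ^i x0` in `ℙ²(ℂ)`. -/
def line₁ (i : Fin 3) : Set (ℙ ℂ (Fin 3 → ℂ)) :=
  {p | ∃ v : Fin 3 → ℂ, ∃ hv : v ≠ 0, Projectivization.mk ℂ v hv = p ∧
    v 1 = ρ ^ (i : ℕ) * v 0}

/-- The line `l_{2i} : x2 = ρ^i x1` in `ℙ²(ℂ)`. -/
def line₂ (i : Fin 3) : Set (ℙ ℂ (Fin 3 → ℂ)) :=
  {p | ∃ v : Fin 3 → ℂ, ∃ hv : v ≠ 0, Projectivization.mk ℂ v hv = p ∧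
    v 2 = ρ ^ (i : ℕ) * v 1}

/-- The line `l_{3i} : x0 = ρ^i x2` in `ℙ²(ℂ)`. -/
def line₃ (i : Fin 3) : Set (ℙ ℂ (Fin 3 → ℂ)) :=
  {p | ∃ v : Fin 3 → ℂ, ∃ hv : v ≠ 0, Projectivization.mk ℂ v hv = p ∧
    v 0 = ρ ^ (i : ℕ) * v 2}

/-- The nine lines, as a set of subsets of `ℙ²(ℂ)`. -/
def nineLines : Set (Set (ℙ ℂ (Fin 3 → ℂ))) :=
  {l | ∃ i : Fin 3, l = line₁ i ∨ l = line₂ i ∨ l = line₃ i}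

/-- The point `y_{1i} = (1 : -ρ^i : 0)`. -/
def ypt₁ (i : Fin 3) : ℙ ℂ (Fin 3 → ℂ) := pt 1 (-ρ ^ (i : ℕ)) 0 0 (by simp)

/-- The point `y_{2i} = (0 : 1 : -ρ^i)`. -/
def ypt₂ (i : Fin 3) : ℙ ℂ (Fin 3 → ℂ) := pt 0 1 (-ρ ^ (i : ℕ)) 1 (by simp)

/-- The point `y_{3i} = (-ρ^i : 0 : 1)`. -/
def ypt₃ (i : Fin 3) : ℙ ℂ (Fin 3 → ℂ) := pt (-ρ ^ (i : ℕ)) 0 1 2 (by simp)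

/-- The nine points `y_{ji}`, as a set. -/
def ninePoints : Set (ℙ ℂ (Fin 3 → ℂ)) :=
  {p | ∃ i : Fin 3, p = ypt₁ i ∨ p = ypt₂ i ∨ p = ypt₃ i}

/-- The twelve intersection points of the nine lines. -/
def twelvePoints : Set (ℙ ℂ (Fin 3 → ℂ)) :=
  {pt 1 0 0 0 (by simp), pt 0 1 0 1 (by simp), pt 0 0 1 2 (by simp),
   pt 1 1 1 0 (by simp), pt 1 ρ (ρ ^ 2) 0 (by simp), pt 1 (ρ ^ 2) ρ 0 (by simp),
   pt 1 1 ρ 0 (by simp), pt 1 ρ 1 0 (by simp), pt ρ 1 1 1 (by simp),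
   pt 1 1 (ρ ^ 2) 0 (by simp), pt 1 (ρ ^ 2) 1 0 (by simp), pt (ρ ^ 2) 1 1 1 (by simp)}

/-- The orbit `O(1:0:0)`. -/
def orb₁ : Set (ℙ ℂ (Fin 3 → ℂ)) :=
  {pt 1 0 0 0 (by simp), pt 0 1 0 1 (by simp), pt 0 0 1 2 (by simp)}

/-- The orbit `O(1:1:1)`. -/
def orb₂ : Set (ℙ ℂ (Fin 3 → ℂ)) :=
  {pt 1 1 1 0 (by simp), pt 1 ρ (ρ ^ 2) 0 (by simp), pt 1 (ρ ^ 2) ρ 0 (by simp)}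

/-- The orbit `O(1:1:ρ)`. -/
def orb₃ : Set (ℙ ℂ (Fin 3 → ℂ)) :=
  {pt 1 1 ρ 0 (by simp), pt 1 ρ 1 0 (by simp), pt ρ 1 1 1 (by simp)}

/-- The orbit `O(1:1:ρ²)`. -/
def orb₄ : Set (ℙ ℂ (Fin 3 → ℂ)) :=
  {pt 1 1 (ρ ^ 2) 0 (by simp), pt 1 (ρ ^ 2) 1 0 (by simp), pt (ρ ^ 2) 1 1 1 (by simp)}


/-- The zero set of `F_λ` in `ℙ²(ℂ)` (well defined since `F_λ` is homogeneous). -/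
def FZero (lam : ℂ) : Set (ℙ ℂ (Fin 3 → ℂ)) :=
  {p | ∃ v : Fin 3 → ℂ, ∃ hv : v ≠ 0, Projectivization.mk ℂ v hv = p ∧ Fpoly lam v = 0}


lemma ρ_cube : ρ ^ 3 = 1 := by
  rw [ρ, ← Complex.exp_nat_mul]
  have h : (3 : ℕ) * (2 * (Real.pi : ℂ) * Complex.I / 3) = 2 * Real.pi * Complex.I := by
    push_cast; ring
  rw [h, Complex.exp_two_pi_mul_I]

lemma hG_aux (lam : ℂ) (y : Fin 3 → ℂ) :
    Gpoly lam ![y 0, ρ ^ 2 * y 1, ρ * y 2] = Gpoly lam y := by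
  have h3 : ρ ^ 3 = 1 := ρ_cube
  simp only [Gpoly, Matrix.cons_val_zero, Matrix.cons_val_one, Matrix.head_cons,
    Matrix.cons_val_two, Matrix.tail_cons]
  linear_combination ((ρ^9 + ρ^6 + ρ^3 + 1) * (y 1)^6 + (ρ^3 + 1) * (y 2)^6
    + 2*(2*lam^3 - 1)*((ρ^3 + 1)*(y 0)^3*(y 1)^3 + (y 0)^3*(y 2)^3
        + (ρ^6 + ρ^3 + 1)*(y 1)^3*(y 2)^3)
    - 6*lam^2*(y 0)*(y 1)*(y 2)*((y 0)^3 + (ρ^6 + ρ^3 + 1)*(y 1)^3 + (ρ^3 + 1)*(y 2)^3)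
    - 3*lam*(lam^3 - 4)*(ρ^3 + 1)*(y 0)^2*(y 1)^2*(y 2)^2) * h3

lemma hsubst_aux (lam : ℂ) (x : Fin 3 → ℂ) :
    subst lam ![x 0, ρ * x 1, ρ ^ 2 * x 2] =
      ![subst lam x 0, ρ ^ 2 * subst lam x 1, ρ * subst lam x 2] := by
  have h3 : ρ ^ 3 = 1 := ρ_cube
  funext i
  fin_cases i <;> simp [subst]
  · linear_combination (3 * lam * x 1 * x 2) * h3
  · ring
  · linear_combination (3 * ρ * x 2 ^ 2) * h3

lemma Fpoly_sigma (lam : ℂ) (x : Fin 3 → ℂ) :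
    Fpoly lam ![x 1, x 2, x 0] = Fpoly lam x := by
  simp only [Fpoly, Gpoly, subst, Matrix.cons_val_zero, Matrix.cons_val_one, Matrix.head_cons,
    Matrix.cons_val_two, Matrix.tail_cons]
  ring

lemma Fpoly_tau (lam : ℂ) (x : Fin 3 → ℂ) :
    Fpoly lam ![x 0, ρ * x 1, ρ ^ 2 * x 2] = Fpoly lam x := by
  rw [Fpoly, hsubst_aux]
  exact hG_aux lam (subst lam x)

lemma Fpoly_iota (lam : ℂ) (x : Fin 3 → ℂ) :
    Fpoly lam ![x 0, x 2, x 1] = Fpoly lam x := by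
  simp only [Fpoly, Gpoly, subst, Matrix.cons_val_zero, Matrix.cons_val_one, Matrix.head_cons,
    Matrix.cons_val_two, Matrix.tail_cons]
  ring

lemma mulVec_ne_zero (M : GL (Fin 3) ℂ) {v : Fin 3 → ℂ} (hv : v ≠ 0) :
    (M : Matrix (Fin 3) (Fin 3) ℂ) *ᵥ v ≠ 0 := fun h0 =>
  hv (mulVec_injective M (by simpa using h0))

lemma act_mk (M : GL (Fin 3) ℂ) (v : Fin 3 → ℂ) (hv : v ≠ 0) :
    act M (Projectivization.mk ℂ v hv) =
      Projectivization.mk ℂ ((M : Matrix (Fin 3) (Fin 3) ℂ) *ᵥ v) (mulVec_ne_zero M hv) := rfl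

lemma act_mul (M N : GL (Fin 3) ℂ) (p : ℙ ℂ (Fin 3 → ℂ)) :
    act (M * N) p = act M (act N p) := by
  induction p using Projectivization.ind with
  | h v hv => simp [act_mk, Units.val_mul, Matrix.mulVec_mulVec]

lemma act_one (p : ℙ ℂ (Fin 3 → ℂ)) : act 1 p = p := by
  induction p using Projectivization.ind with
  | h v hv => simp [act_mk]

lemma act_image (lam : ℂ) (M : GL (Fin 3) ℂ)
    (h : ∀ v : Fin 3 → ℂ, Fpoly lam ((M : Matrix (Fin 3) (Fin 3) ℂ) *ᵥ v) = Fpoly lam v) :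
    act M '' FZero lam = FZero lam := by
  have hMM : ∀ v : Fin 3 → ℂ, (M : Matrix (Fin 3) (Fin 3) ℂ) *ᵥ
      (((M⁻¹ : GL (Fin 3) ℂ) : Matrix (Fin 3) (Fin 3) ℂ) *ᵥ v) = v := by
    intro v
    rw [Matrix.mulVec_mulVec, ← Units.val_mul, mul_inv_cancel]
    simp
  ext q
  constructor
  · rintro ⟨p, ⟨v, hv, rfl, hFv⟩, rfl⟩
    exact ⟨_, mulVec_ne_zero M hv, (act_mk M v hv).symm, by rw [h v]; exact hFv⟩
  · rintro ⟨v, hv, rfl, hFv⟩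
    refine ⟨act M⁻¹ (Projectivization.mk ℂ v hv), ?_, ?_⟩
    · refine ⟨_, mulVec_ne_zero M⁻¹ hv, (act_mk M⁻¹ v hv).symm, ?_⟩
      calc Fpoly lam (((M⁻¹ : GL (Fin 3) ℂ) : Matrix (Fin 3) (Fin 3) ℂ) *ᵥ v)
          = Fpoly lam ((M : Matrix (Fin 3) (Fin 3) ℂ) *ᵥ
              (((M⁻¹ : GL (Fin 3) ℂ) : Matrix (Fin 3) (Fin 3) ℂ) *ᵥ v)) := (h _).symm
        _ = Fpoly lam v := by rw [hMM]
        _ = 0 := hFv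
    · rw [← act_mul, mul_inv_cancel, act_one]

lemma sigma_mulVec (v : Fin 3 → ℂ) : σmat *ᵥ v = ![v 1, v 2, v 0] := by
  funext i; fin_cases i <;>
    simp [σmat, Matrix.mulVec, dotProduct, Fin.sum_univ_three]

lemma tau_mulVec (v : Fin 3 → ℂ) : τmat *ᵥ v = ![v 0, ρ * v 1, ρ ^ 2 * v 2] := by
  funext i; fin_cases i <;>
    simp [τmat, Matrix.mulVec, dotProduct, Fin.sum_univ_three]

lemma iota_mulVec (v : Fin 3 → ℂ) : ιmat *ᵥ v = ![v 0, v 2, v 1] := by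
  funext i; fin_cases i <;>
    simp [ιmat, Matrix.mulVec, dotProduct, Fin.sum_univ_three]

/-- For every `λ ∈ ℂ` the polynomial `F_λ` is invariant under the substitutions induced by
`σ`, `τ` and `ι`; consequently its zero set in `ℙ²(ℂ)` is invariant under the subgroup of
`GL₃(ℂ)` generated by `σ`, `τ` and `ι`. -/
theorem Fpoly_heisenberg_invariant (lam : ℂ) :
    (∀ x : Fin 3 → ℂ, Fpoly lam ![x 1, x 2, x 0] = Fpoly lam x) ∧
    (∀ x : Fin 3 → ℂ, Fpoly lam ![x 0, ρ * x 1, ρ ^ 2 * x 2] = Fpoly lam x) ∧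
    (∀ x : Fin 3 → ℂ, Fpoly lam ![x 0, x 2, x 1] = Fpoly lam x) ∧
    (∀ M ∈ Hgrp, act M '' FZero lam = FZero lam) := by
  refine ⟨Fpoly_sigma lam, Fpoly_tau lam, Fpoly_iota lam, ?_⟩
  intro M hM
  induction hM using Subgroup.closure_induction with
  | mem x hx =>
    simp only [Set.mem_insert_iff, Set.mem_singleton_iff] at hx
    rcases hx with rfl | rfl | rfl
    · refine act_image lam σgl fun v => ?_
      rw [show ((σgl : Matrix (Fin 3) (Fin 3) ℂ)) = σmat from rfl, sigma_mulVec]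
      exact Fpoly_sigma lam v
    · refine act_image lam τgl fun v => ?_
      rw [show ((τgl : Matrix (Fin 3) (Fin 3) ℂ)) = τmat from rfl, tau_mulVec]
      exact Fpoly_tau lam v
    · refine act_image lam ιgl fun v => ?_
      rw [show ((ιgl : Matrix (Fin 3) (Fin 3) ℂ)) = ιmat from rfl, iota_mulVec]
      exact Fpoly_iota lam v
  | one =>
    rw [show act 1 = id from funext act_one, Set.image_id]
  | mul x y hx hy px py =>
    rw [show act (x * y) = act x ∘ act y from funext (act_mul x y), Set.image_comp, py, px]
  | inv x hx px =>
    calc act x⁻¹ '' FZero lam = act x⁻¹ '' (act x '' FZero lam) := by rw [px]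
      _ = act (x⁻¹ * x) '' FZero lam := by
          rw [← Set.image_comp, ← show act (x⁻¹ * x) = act x⁻¹ ∘ act x
            from funext (act_mul x⁻¹ x)]
      _ = FZero lam := by rw [inv_mul_cancel, show act 1 = id from funext act_one, Set.image_id]


end
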